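/- arXiv:1906.08515 — 2 statements merged into one kernel-verified Lean document; each statement's English description precedes it below -/
import Mathlib

section
/- Let X be a finite set of integers each greater than 1. Then the number of connected components of the bipartite divisor graph B(X) equals the number of connected components of the prime graph Δ(X). Here B(X) has vertex set the disjoint union of X and the set of primes dividing some element of X, with a prime p adjacent to x ∈ X iff p divides x; Δ(X) has vertex set the primes dividing some element of X, with p adjacent to q (p ≠ q) iff pq divides some element of X. -/
open SimpleGraph

/-- Vertex type of the bipartite divisor graph of a set of naturals:
the disjoint union of `X` and of the primes dividing some element of `X`. -/
abbrev BDGVert (X : Set ℕ) : Type :=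
  {x : ℕ // x ∈ X} ⊕ {p : ℕ // p.Prime ∧ ∃ x ∈ X, p ∣ x}

/-- The bipartite divisor graph `B(X)`: a prime `p` is adjacent to `x ∈ X` iff `p ∣ x`. -/
def bdg (X : Set ℕ) : SimpleGraph (BDGVert X) :=
  SimpleGraph.fromRel (fun a b =>
    match a, b with
    | Sum.inr p, Sum.inl x => p.1 ∣ x.1
    | _, _ => False)

/-- The prime graph `Δ(X)`: primes `p ≠ q` are adjacent iff `pq` divides some element of `X`. -/
def primeGraph (X : Set ℕ) : SimpleGraph {p : ℕ // p.Prime ∧ ∃ x ∈ X, p ∣ x} :=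
  SimpleGraph.fromRel (fun p q => ∃ x ∈ X, p.1 * q.1 ∣ x)

/-- The common divisor graph `Γ(X)`: distinct `x, y ∈ X` are adjacent iff `gcd(x,y) ≠ 1`. -/
def cdGraph (X : Set ℕ) : SimpleGraph {x : ℕ // x ∈ X} :=
  SimpleGraph.fromRel (fun a b => Nat.gcd a.1 b.1 ≠ 1)

/-- The set of irreducible complex character degrees of a group `G`. -/
def charDegrees (G : Type) [Group G] : Set ℕ :=
  {n | ∃ V : FDRep ℂ G, CategoryTheory.Simple V ∧ Module.finrank ℂ V = n}

/-- Disjoint union of two simple graphs. -/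
def disjUnionGraph {α β : Type*} (G : SimpleGraph α) (H : SimpleGraph β) :
    SimpleGraph (α ⊕ β) where
  Adj a b :=
    match a, b with
    | Sum.inl x, Sum.inl y => G.Adj x y
    | Sum.inr x, Sum.inr y => H.Adj x y
    | _, _ => False
  symm := by
    constructor
    rintro (x | x) (y | y) h <;> simp_all <;> exact h.symm
  loopless := by
    constructor
    rintro (x | x) h <;> simp_all

/-!
Every `x ∈ X` is adjacent in `B(X)` to the prime `minFac x`, so each component of `B(X)` contains
a prime. Two distinct primes are joined by an edge of `Δ(X)` exactly when they have a common
neighbour in `B(X)`, so primes lie in the same component of `B(X)` iff they lie in the same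
component of `Δ(X)`. Hence `p ↦ p` induces a bijection between the two sets of components.
-/

namespace SimpleGraph

variable {V W : Type*} {G : SimpleGraph V} {H : SimpleGraph W}

theorem Reachable.map_of_adj_reachable {f : V → W}
    (hf : ∀ a b, G.Adj a b → H.Reachable (f a) (f b)) {a b : V} (hab : G.Reachable a b) :
    H.Reachable (f a) (f b) := by
  rw [reachable_iff_reflTransGen] at hab ⊢
  exact Relation.ReflTransGen.lift' f
    (fun a b h => (reachable_iff_reflTransGen _ _).1 (hf a b h)) a b hab

def ConnectedComponent.mapOfAdjReachable (f : V → W)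
    (hf : ∀ a b, G.Adj a b → H.Reachable (f a) (f b)) :
    G.ConnectedComponent → H.ConnectedComponent :=
  Quot.lift (fun v => H.connectedComponentMk (f v))
    (fun _ _ h => ConnectedComponent.sound (h.map_of_adj_reachable hf))

def ConnectedComponent.equivOfAdjReachable (f : V → W) (g : W → V)
    (hf : ∀ a b, G.Adj a b → H.Reachable (f a) (f b))
    (hg : ∀ a b, H.Adj a b → G.Reachable (g a) (g b))
    (hgf : ∀ v, G.Reachable (g (f v)) v) (hfg : ∀ w, H.Reachable (f (g w)) w) :
    G.ConnectedComponent ≃ H.ConnectedComponent where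
  toFun := mapOfAdjReachable f hf
  invFun := mapOfAdjReachable g hg
  left_inv := ConnectedComponent.ind fun v => ConnectedComponent.sound (hgf v)
  right_inv := ConnectedComponent.ind fun w => ConnectedComponent.sound (hfg w)

end SimpleGraph

section DivisorGraphs

variable {X : Set ℕ}

abbrev PrimeVert (X : Set ℕ) : Type := {p : ℕ // p.Prime ∧ ∃ x ∈ X, p ∣ x}

theorem bdg_adj_inr_inl {p : PrimeVert X} {x : X} :
    (bdg X).Adj (.inr p) (.inl x) ↔ p.1 ∣ x.1 := by
  simp [bdg]

theorem bdg_not_adj_inl_inl {x y : X} : ¬ (bdg X).Adj (.inl x) (.inl y) := by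
  simp [bdg]

theorem bdg_not_adj_inr_inr {p q : PrimeVert X} : ¬ (bdg X).Adj (.inr p) (.inr q) := by
  simp [bdg]

theorem primeGraph_reachable_of_dvd {p q : PrimeVert X} {x : ℕ} (hx : x ∈ X)
    (hp : p.1 ∣ x) (hq : q.1 ∣ x) : (primeGraph X).Reachable p q := by
  obtain rfl | hne := eq_or_ne p q
  · rfl
  refine Adj.reachable ⟨hne, Or.inl ⟨x, hx, ?_⟩⟩
  have hcop : p.1.Coprime q.1 := (Nat.coprime_primes p.2.1 q.2.1).2 (Subtype.coe_injective.ne hne)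
  exact hcop.mul_dvd_of_dvd_of_dvd hp hq

theorem bdg_reachable_inr_of_mul_dvd {p q : PrimeVert X} {x : ℕ} (hx : x ∈ X)
    (hpq : p.1 * q.1 ∣ x) : (bdg X).Reachable (.inr p) (.inr q) :=
  have hp : (bdg X).Adj (.inr p) (.inl ⟨x, hx⟩) :=
    bdg_adj_inr_inl.2 ((dvd_mul_right _ _).trans hpq)
  have hq : (bdg X).Adj (.inr q) (.inl ⟨x, hx⟩) :=
    bdg_adj_inr_inl.2 ((dvd_mul_left _ _).trans hpq)
  hp.reachable.trans hq.symm.reachable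

theorem bdg_reachable_inr_of_primeGraph_adj {p q : PrimeVert X} (h : (primeGraph X).Adj p q) :
    (bdg X).Reachable (.inr p) (.inr q) := by
  obtain ⟨-, ⟨x, hx, hpq⟩ | ⟨x, hx, hqp⟩⟩ := h
  · exact bdg_reachable_inr_of_mul_dvd hx hpq
  · exact (bdg_reachable_inr_of_mul_dvd hx hqp).symm

variable (h1 : ∀ x ∈ X, x ≠ 1)
include h1

def bdgToPrime : BDGVert X → PrimeVert X
  | .inl x => ⟨x.1.minFac, Nat.minFac_prime (h1 x.1 x.2), x.1, x.2, Nat.minFac_dvd _⟩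
  | .inr p => p

theorem bdg_reachable_inr_bdgToPrime (v : BDGVert X) :
    (bdg X).Reachable (.inr (bdgToPrime h1 v)) v := by
  rcases v with x | p
  · exact (bdg_adj_inr_inl.2 (Nat.minFac_dvd x.1)).reachable
  · rfl

theorem primeGraph_reachable_bdgToPrime_of_adj (a b : BDGVert X) (h : (bdg X).Adj a b) :
    (primeGraph X).Reachable (bdgToPrime h1 a) (bdgToPrime h1 b) := by
  rcases a with x | p <;> rcases b with y | q
  · exact (bdg_not_adj_inl_inl h).elim
  · exact primeGraph_reachable_of_dvd x.2 (Nat.minFac_dvd x.1) (bdg_adj_inr_inl.1 h.symm)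
  · exact primeGraph_reachable_of_dvd y.2 (bdg_adj_inr_inl.1 h) (Nat.minFac_dvd y.1)
  · exact (bdg_not_adj_inr_inr h).elim

end DivisorGraphs

theorem stmt0_general (X : Set ℕ) (h1 : ∀ x ∈ X, 1 < x) :
    Nat.card (bdg X).ConnectedComponent = Nat.card (primeGraph X).ConnectedComponent := by
  have h1' : ∀ x ∈ X, x ≠ 1 := fun x hx => (h1 x hx).ne'
  exact Nat.card_congr <| ConnectedComponent.equivOfAdjReachable (bdgToPrime h1') Sum.inr
    (primeGraph_reachable_bdgToPrime_of_adj h1') (fun _ _ => bdg_reachable_inr_of_primeGraph_adj)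
    (bdg_reachable_inr_bdgToPrime h1') (fun _ => .rfl)

theorem stmt0 (X : Set ℕ) (hfin : X.Finite) (h1 : ∀ x ∈ X, 1 < x) :
    Nat.card (bdg X).ConnectedComponent = Nat.card (primeGraph X).ConnectedComponent :=
  stmt0_general X h1
end

section
/- Let p, q, r be primes with q ≠ r such that neither q nor r divides p^{qr} − 1. If (p^{qr} − 1)/(p^r − 1) is a prime power, we have a contradiction; hence under these hypotheses (p^{qr} − 1)/(p^r − 1) is not a prime power. -/
open SimpleGraph

/-! The quotient `(p ^ (q * r) - 1) / (p ^ r - 1)` is `Φ_q(p) * Φ_{qr}(p)`, and both factors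
exceed `1`, so a prime `s` of which it is a power divides both. As `s ∣ p ^ (q * r) - 1`, the
hypotheses give `s ≠ q, r`, hence `s ∤ qr`; but then the order of `p` modulo `s` would be both
`q` and `qr`. -/

open Polynomial

lemma Prime.dvd_of_dvd_pow_of_not_isUnit {M : Type*} [CommMonoidWithZero M] [IsCancelMulZero M]
    {p b : M} {k : ℕ} (hp : Prime p) (hb : b ∣ p ^ k) (hb' : ¬IsUnit b) : p ∣ b := by
  obtain ⟨i, -, hi⟩ := (dvd_prime_pow hp k).1 hb
  obtain rfl | hi0 := Nat.eq_zero_or_pos i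
  · exact absurd (hi.isUnit_iff.2 (by simp)) hb'
  · exact (dvd_pow_self p hi0.ne').trans hi.symm.dvd

lemma orderOf_eq_of_prime_dvd_eval_cyclotomic {s n : ℕ} {a : ℤ} (hs : s.Prime) (hsn : ¬s ∣ n)
    (hdvd : (s : ℤ) ∣ (cyclotomic n ℤ).eval a) : orderOf (a : ZMod s) = n := by
  have : Fact s.Prime := ⟨hs⟩
  have : NeZero (n : ZMod s) := ⟨by rwa [Ne, ZMod.natCast_eq_zero_iff]⟩
  have hroot : IsRoot (cyclotomic n (ZMod s)) (a : ZMod s) := by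
    rwa [← map_cyclotomic_int, IsRoot.def, eval_intCast_map, eq_intCast,
      ZMod.intCast_zmod_eq_zero_iff_dvd]
  exact ((isRoot_cyclotomic_iff.1 hroot).eq_orderOf).symm

lemma eq_of_prime_dvd_eval_cyclotomic {s m n : ℕ} {a : ℤ} (hs : s.Prime) (hsm : ¬s ∣ m)
    (hsn : ¬s ∣ n) (hm : (s : ℤ) ∣ (cyclotomic m ℤ).eval a)
    (hn : (s : ℤ) ∣ (cyclotomic n ℤ).eval a) : m = n :=
  (orderOf_eq_of_prime_dvd_eval_cyclotomic hs hsm hm).symm.trans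
    (orderOf_eq_of_prime_dvd_eval_cyclotomic hs hsn hn)

lemma not_isUnit_eval_cyclotomic {n p : ℕ} (hn : 1 < n) (hp : 1 < p) :
    ¬IsUnit ((cyclotomic n ℤ).eval (p : ℤ)) := by
  have := sub_one_lt_natAbs_cyclotomic_eval hn hp.ne'
  rw [Int.isUnit_iff_natAbs_eq]
  omega

lemma Nat.Prime.divisors_mul_sdiff_divisors {q r : ℕ} (hq : q.Prime) (hr : r.Prime)
    (hqr : q ≠ r) :
    (q * r).divisors \ r.divisors = {q, q * r} := by
  have hq1 := hq.one_lt
  have hr1 := hr.one_lt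
  have : q * r ≠ r := by nlinarith
  have : q * r ≠ 1 := by nlinarith
  have : q * r ≠ q := by nlinarith
  rw [Nat.divisors_mul, hq.divisors, hr.divisors]
  ext d
  simp only [Finset.mem_sdiff, Finset.mem_mul, Finset.mem_insert, Finset.mem_singleton,
    exists_eq_or_imp, exists_eq_left, one_mul, mul_one]
  grind

lemma X_pow_sub_one_mul_cyclotomic_mul_cyclotomic (R : Type*) [CommRing R] {q r : ℕ}
    (hq : q.Prime) (hr : r.Prime) (hqr : q ≠ r) :
    (X ^ r - 1) * (cyclotomic q R * cyclotomic (q * r) R) = X ^ (q * r) - 1 := by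
  rw [← X_pow_sub_one_mul_prod_cyclotomic_eq_X_pow_sub_one_of_dvd R (dvd_mul_left r q)
      (Nat.mul_ne_zero hq.ne_zero hr.ne_zero), hq.divisors_mul_sdiff_divisors hr hqr,
    Finset.prod_pair (by nlinarith [hq.one_lt, hr.one_lt])]

lemma natCast_pow_mul_sub_one_div_pow_sub_one {p q r : ℕ} (hp : 1 < p) (hq : q.Prime)
    (hr : r.Prime) (hqr : q ≠ r) :
    (((p ^ (q * r) - 1) / (p ^ r - 1) : ℕ) : ℤ) =
      (cyclotomic q ℤ).eval (p : ℤ) * (cyclotomic (q * r) ℤ).eval (p : ℤ) := by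
  have hpr : (1 : ℤ) < (p : ℤ) ^ r := one_lt_pow₀ (by exact_mod_cast hp) hr.ne_zero
  have key := congrArg (eval (p : ℤ)) (X_pow_sub_one_mul_cyclotomic_mul_cyclotomic ℤ hq hr hqr)
  simp only [eval_mul, eval_sub, eval_pow, eval_X, eval_one] at key
  push_cast [Nat.one_le_pow _ _ (zero_lt_one.trans hp)]
  exact Int.ediv_eq_of_eq_mul_right (by linarith) key.symm

theorem stmt10 (p q r : ℕ) (hp : p.Prime) (hq : q.Prime) (hr : r.Prime) (hqr : q ≠ r)
    (h1 : ¬ q ∣ p ^ (q * r) - 1) (h2 : ¬ r ∣ p ^ (q * r) - 1) :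
    ¬ ∃ s k : ℕ, s.Prime ∧ (p ^ (q * r) - 1) / (p ^ r - 1) = s ^ k := by
  rintro ⟨s, k, hs, hsk⟩
  have hqr1 : 1 < q * r := one_lt_mul'' hq.one_lt hr.one_lt
  have hfac : (s : ℤ) ^ k =
      (cyclotomic q ℤ).eval (p : ℤ) * (cyclotomic (q * r) ℤ).eval (p : ℤ) := by
    rw [← natCast_pow_mul_sub_one_div_pow_sub_one hp.one_lt hq hr hqr, hsk, Nat.cast_pow]
  have hsq := (Nat.prime_iff_prime_int.1 hs).dvd_of_dvd_pow_of_not_isUnit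
    (hfac ▸ dvd_mul_right _ _) (not_isUnit_eval_cyclotomic hq.one_lt hp.one_lt)
  have hsqr := (Nat.prime_iff_prime_int.1 hs).dvd_of_dvd_pow_of_not_isUnit
    (hfac ▸ dvd_mul_left _ _) (not_isUnit_eval_cyclotomic hqr1 hp.one_lt)
  have hsN : s ∣ p ^ (q * r) - 1 := by
    have hdvd := eval_dvd (x := (p : ℤ)) (cyclotomic.dvd_X_pow_sub_one (q * r) ℤ)
    rw [eval_sub, eval_pow, eval_X, eval_one] at hdvd
    rw [← Int.natCast_dvd_natCast, Nat.cast_sub (Nat.one_le_pow _ _ hp.pos), Nat.cast_pow,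
      Nat.cast_one]
    exact hsqr.trans hdvd
  have hs_q : ¬s ∣ q := fun h => h1 ((Nat.prime_dvd_prime_iff_eq hs hq).1 h ▸ hsN)
  have hs_r : ¬s ∣ r := fun h => h2 ((Nat.prime_dvd_prime_iff_eq hs hr).1 h ▸ hsN)
  have hq_eq := eq_of_prime_dvd_eval_cyclotomic hs hs_q (hs.not_dvd_mul hs_q hs_r) hsq hsqr
  simp [hq.ne_zero, hr.ne_one] at hq_eq
end
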